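/- arXiv:2601.22405 — 4 statements merged into one kernel-verified Lean document; each statement's English description precedes it below -/
import Mathlib

section
/- The area of the symmetric difference of two open disks of radius R in ℝ² with centers x and y satisfies μ(B(x,R) Δ B(y,R)) ≤ 4R·‖x − y‖; consequently, the map x ↦ B(x, R) is Lipschitz with constant 4R with respect to the symmetric difference semi-metric induced by Lebesgue measure on ℝ². -/
open MeasureTheory Metric Set
open scoped symmDiff

/-!
A measure-preserving isometry moves the two disks to disks centred at `0` and at `(0, d)` with
`d = ‖x - y‖`. Each vertical line `{a} × ℝ` meets the two disks in intervals of equal length that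
are translates of each other by `d`, so their symmetric difference has length at most `2d`; it is
empty unless `|a| < R`. Integrating over `a` (Fubini) bounds the area by `2d · 2R`.
-/

theorem MeasureTheory.MeasurePreserving.measure_ball_symmDiff_ball {α : Type*}
    [PseudoMetricSpace α] [MeasurableSpace α] [OpensMeasurableSpace α] {μ : Measure α}
    {f : α ≃ᵢ α} (hf : MeasurePreserving f μ μ) (x y : α) (r : ℝ) :
    μ (ball (f x) r ∆ ball (f y) r) = μ (ball x r ∆ ball y r) := by
  rw [← hf.measure_preimage (measurableSet_ball.symmDiff measurableSet_ball).nullMeasurableSet,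
    preimage_symmDiff, f.preimage_ball, f.preimage_ball, f.symm_apply_apply, f.symm_apply_apply]

theorem volume_ball_symmDiff_ball_eq_of_dist_eq {E : Type*} [NormedAddCommGroup E]
    [InnerProductSpace ℝ E] [FiniteDimensional ℝ E] [MeasurableSpace E] [BorelSpace E]
    {x y x' y' : E} (h : dist x y = dist x' y') (r : ℝ) :
    volume (ball x r ∆ ball y r) = volume (ball x' r ∆ ball y' r) := by
  have translate (x y : E) : volume (ball x r ∆ ball y r) = volume (ball 0 r ∆ ball (y - x) r) := by
    simpa using (measurePreserving_add_right volume x).measure_ball_symmDiff_ball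
      (f := IsometryEquiv.addRight x) 0 (y - x) r
  have hnorm : ‖y - x‖ = ‖y' - x'‖ := by rwa [← dist_eq_norm, ← dist_eq_norm, dist_comm, dist_comm y']
  set e := Submodule.reflection (ℝ ∙ (y - x - (y' - x')))ᗮ
  rw [translate x y, translate x', ← Submodule.reflection_sub hnorm]
  conv_rhs => rw [← map_zero e]
  exact (e.measurePreserving.measure_ball_symmDiff_ball (f := e.toIsometryEquiv) 0 (y - x) r).symm

theorem Set.Ioo_symmDiff_Ioo_subset {α : Type*} [LinearOrder α] (a b a' b' : α) :
    Ioo a b ∆ Ioo a' b' ⊆ uIcc a a' ∪ uIcc b b' := by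
  intro z hz
  simp only [Set.mem_symmDiff, mem_Ioo, mem_union, mem_uIcc] at hz ⊢
  grind

theorem Real.volume_ball_symmDiff_ball_le (c c' r : ℝ) :
    volume (ball c r ∆ ball c' r) ≤ ENNReal.ofReal (2 * |c - c'|) := by
  rw [Real.ball_eq_Ioo, Real.ball_eq_Ioo]
  calc _ ≤ volume (uIcc (c - r) (c' - r) ∪ uIcc (c + r) (c' + r)) :=
        measure_mono (Ioo_symmDiff_Ioo_subset ..)
    _ ≤ volume (uIcc (c - r) (c' - r)) + volume (uIcc (c + r) (c' + r)) := measure_union_le _ _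
    _ = ENNReal.ofReal (2 * |c - c'|) := by
        rw [Real.volume_interval, Real.volume_interval,
          ← ENNReal.ofReal_add (abs_nonneg _) (abs_nonneg _)]
        congr 1
        rw [sub_sub_sub_cancel_right, add_sub_add_right_eq_sub, abs_sub_comm c' c, two_mul]

theorem EuclideanSpace.measurePreserving_toLp_finTwo :
    MeasurePreserving (fun p : ℝ × ℝ => !₂[p.1, p.2]) :=
  (PiLp.volume_preserving_toLp (Fin 2)).comp (volume_preserving_finTwoArrow ℝ).symm

/-- The radius is `√` of a nonpositive number, i.e. `0`, exactly when the line misses the disk. -/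
theorem EuclideanSpace.setOf_mem_ball_finTwo {R : ℝ} (hR : 0 ≤ R) (p : EuclideanSpace ℝ (Fin 2))
    (a : ℝ) : {b : ℝ | !₂[a, b] ∈ ball p R} = ball (p 1) √(R ^ 2 - (a - p 0) ^ 2) := by
  ext b
  simp only [mem_ofPred_eq, mem_ball, EuclideanSpace.dist_eq, Fin.sum_univ_two, Real.dist_eq]
  simp only [Fin.isValue, Matrix.cons_val_zero, Matrix.cons_val_one, Matrix.cons_val_fin_one]
  rw [Real.sqrt_lt (by positivity) hR, Real.lt_sqrt (abs_nonneg _), sq_abs]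
  constructor <;> intro h <;> linarith

theorem EuclideanSpace.volume_ball_symmDiff_ball_le_of_apply_zero_eq {R : ℝ} (hR : 0 ≤ R)
    {x y : EuclideanSpace ℝ (Fin 2)} (h : x 0 = y 0) :
    volume (ball x R ∆ ball y R) ≤ ENNReal.ofReal (4 * R * |x 1 - y 1|) := by
  have slice_le (a : ℝ) : volume {b : ℝ | !₂[a, b] ∈ ball x R ∆ ball y R} ≤
      (ball (x 0) R).indicator (fun _ ↦ ENNReal.ofReal (2 * |x 1 - y 1|)) a := by
    have hy := setOf_mem_ball_finTwo hR y a
    rw [← h] at hy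
    change volume ({b : ℝ | !₂[a, b] ∈ ball x R} ∆ {b : ℝ | !₂[a, b] ∈ ball y R}) ≤ _
    rw [setOf_mem_ball_finTwo hR x a, hy]
    by_cases ha : a ∈ ball (x 0) R
    · rw [indicator_of_mem ha]
      exact Real.volume_ball_symmDiff_ball_le _ _ _
    · have hs : √(R ^ 2 - (a - x 0) ^ 2) = 0 := by
        rw [Real.sqrt_eq_zero', sub_nonpos, sq_le_sq, abs_of_nonneg hR]
        simpa [Real.dist_eq] using ha
      simp [hs]
  have hmeas : MeasurableSet (ball x R ∆ ball y R) := measurableSet_ball.symmDiff measurableSet_ball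
  calc volume (ball x R ∆ ball y R)
      = volume ((fun p : ℝ × ℝ ↦ !₂[p.1, p.2]) ⁻¹' (ball x R ∆ ball y R)) :=
        (measurePreserving_toLp_finTwo.measure_preimage hmeas.nullMeasurableSet).symm
    _ = ∫⁻ a, volume {b : ℝ | !₂[a, b] ∈ ball x R ∆ ball y R} := by
        rw [Measure.volume_eq_prod,
          Measure.prod_apply (measurePreserving_toLp_finTwo.measurable hmeas)]
        rfl
    _ ≤ ∫⁻ a, (ball (x 0) R).indicator (fun _ ↦ ENNReal.ofReal (2 * |x 1 - y 1|)) a :=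
        lintegral_mono slice_le
    _ = ENNReal.ofReal (4 * R * |x 1 - y 1|) := by
        rw [lintegral_indicator_const measurableSet_ball, Real.volume_ball,
          ← ENNReal.ofReal_mul (by positivity)]
        ring_nf

/-- The Lebesgue area of the symmetric difference of two radius-`R` open disks in
the plane is at most `4 R ‖x − y‖`; i.e. `x ↦ B(x, R)` is `4R`-Lipschitz with
respect to the symmetric difference semi-metric. -/
theorem ball_symmDiff_lipschitz (R : ℝ) (hR : 0 < R)
    (x y : EuclideanSpace ℝ (Fin 2)) :
    (volume (symmDiff (ball x R) (ball y R))).toReal ≤ 4 * R * ‖x - y‖ := by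
  have hdist : dist x y = dist 0 (EuclideanSpace.single (1 : Fin 2) ‖x - y‖) := by
    simp [dist_eq_norm]
  refine ENNReal.toReal_le_of_le_ofReal (by positivity) ?_
  rw [volume_ball_symmDiff_ball_eq_of_dist_eq hdist]
  simpa using EuclideanSpace.volume_ball_symmDiff_ball_le_of_apply_zero_eq hR.le
    (x := 0) (y := EuclideanSpace.single 1 ‖x - y‖) (by simp)
end

section
/- Let 𝒟 ⊆ ℝ² be bounded with diameter D, let φ > 0, and for z = (x, θ) ∈ 𝒟 × ℝ define the infinite-range visibility cone C(z) = { y ∈ 𝒟 : |θ − atan2(y₂ − x₂, y₁ − x₁)| ≤ φ/2 }. Then z ↦ C(z) is μ-globally Lipschitz over 𝒟 × ℝ with respect to Lebesgue measure μ on ℝ², specifically μ(C(z') Δ C(z'')) ≤ 2D·√(D² + 1) · ‖z' − z''‖ for all z', z'' ∈ 𝒟 × ℝ. -/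
open MeasureTheory Metric

/-!
Split the change of state into a turn of the heading at a fixed apex and a translation of the
apex at a fixed heading. Turning by `δθ` sweeps two circular sectors of radius `D` and angle `δθ`.
When the apex moves by `v`, a point `y` lying in exactly one of the two cones sees the segment
from `y - x''` to `y - x'` leave the angular sector of the cone, so it crosses one of the two
boundary rays within distance `D` of the apex; hence `y - x''` lies in one of the two
parallelograms spanned by `v` and a boundary ray of length `D`. By Hadamard's inequality these
have area at most `D ‖v‖`, and Cauchy–Schwarz turns `2D (D δθ + ‖v‖)` into the stated bound.
-/

open Set Complex Real
open scoped Pointwise symmDiff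

attribute [local instance] Complex.finrank_real_complex_fact

theorem Set.Icc_symmDiff_Icc_subset (θ' θ'' r : ℝ) :
    Icc (θ' - r) (θ' + r) ∆ Icc (θ'' - r) (θ'' + r) ⊆
      Icc (min θ' θ'' - r) (max θ' θ'' - r) ∪ Icc (min θ' θ'' + r) (max θ' θ'' + r) := by
  intro α hα
  simp only [mem_symmDiff, mem_Icc, mem_union, not_and_or, not_le] at hα ⊢
  rcases le_total θ' θ'' with h | h
  · simp only [min_eq_left h, max_eq_right h]; grind
  · simp only [min_eq_right h, max_eq_left h]; grind

theorem Real.mul_add_mul_le_sqrt_mul_sqrt (a b c d : ℝ) :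
    a * c + b * d ≤ √(a ^ 2 + b ^ 2) * √(c ^ 2 + d ^ 2) := by
  rw [← Real.sqrt_mul (by positivity)]
  exact Real.le_sqrt_of_sq_le (by nlinarith [sq_nonneg (a * d - b * c)])

theorem MeasureTheory.measure_preimage_sub_right {G : Type*} [AddGroup G] [MeasurableSpace G]
    [MeasurableAdd G] (μ : Measure G) [μ.IsAddRightInvariant] (g : G) (A : Set G) :
    μ ((· - g) ⁻¹' A) = μ A := by
  simpa only [sub_eq_add_neg] using measure_preimage_add_right μ (-g) A

theorem volume_parallelepiped_le_prod_norm {E : Type*} [NormedAddCommGroup E]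
    [InnerProductSpace ℝ E] [FiniteDimensional ℝ E] [MeasurableSpace E] [BorelSpace E]
    {n : ℕ} [Fact (Module.finrank ℝ E = n)] (v : Fin n → E) :
    volume (parallelepiped v) ≤ ENNReal.ofReal (∏ i, ‖v i‖) := by
  let o : Orientation ℝ E (Fin n) := (Module.finBasisOfFinrankEq ℝ E Fact.out).orientation
  rw [← o.measure_eq_volume, AlternatingMap.measure_parallelepiped]
  exact ENNReal.ofReal_le_ofReal (o.abs_volumeForm_apply_le v)

theorem Complex.volume_segment_add_segment_le (u v : ℂ) :
    volume (segment ℝ 0 u + segment ℝ 0 v) ≤ ENNReal.ofReal (‖u‖ * ‖v‖) := by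
  simpa [parallelepiped_eq_sum_segment, Fin.sum_univ_two, Fin.prod_univ_two] using
    volume_parallelepiped_le_prod_norm ![u, v]

theorem Complex.volume_closedBall_inter_arg_preimage_Icc_le {R : ℝ} (hR : 0 ≤ R) (c d : ℝ) :
    volume (closedBall (0 : ℂ) R ∩ arg ⁻¹' Icc c d) ≤ ENNReal.ofReal (R ^ 2 * (d - c)) := by
  set S := closedBall (0 : ℂ) R ∩ arg ⁻¹' Icc c d
  have hpolar : ∀ p ∈ Complex.polarCoord.target,
      ‖Complex.polarCoord.symm p‖ = p.1 ∧ arg (Complex.polarCoord.symm p) = p.2 := fun p hp =>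
    Prod.ext_iff.mp ((Complex.polarCoord_apply _).symm.trans (Complex.polarCoord.right_inv hp))
  calc volume S = ∫⁻ z, S.indicator 1 z := (lintegral_indicator_one
        (measurableSet_closedBall.inter (measurable_arg measurableSet_Icc))).symm
    _ = ∫⁻ p in Complex.polarCoord.target,
          ENNReal.ofReal p.1 • S.indicator 1 (Complex.polarCoord.symm p) :=
        (Complex.lintegral_comp_polarCoord_symm _).symm
    _ ≤ ∫⁻ p in Complex.polarCoord.target, (Icc 0 R ×ˢ Icc c d).indicator
          (fun _ => ENNReal.ofReal R) p := by
        refine setLIntegral_mono' Complex.polarCoord.open_target.measurableSet fun p hp => ?_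
        obtain ⟨hnorm, harg⟩ := hpolar p hp
        by_cases hS : Complex.polarCoord.symm p ∈ S
        · have hp' : p ∈ Icc 0 R ×ˢ Icc c d := by
            refine ⟨⟨le_of_lt hp.1, ?_⟩, harg ▸ hS.2⟩
            simpa only [mem_closedBall_zero_iff, hnorm] using hS.1
          rw [indicator_of_mem hS, indicator_of_mem hp', Pi.one_apply, smul_eq_mul, mul_one]
          exact ENNReal.ofReal_le_ofReal hp'.1.2
        · rw [indicator_of_notMem hS, smul_zero]
          exact zero_le
    _ ≤ ∫⁻ p, (Icc 0 R ×ˢ Icc c d).indicator (fun _ => ENNReal.ofReal R) p :=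
        setLIntegral_le_lintegral _ _
    _ = ENNReal.ofReal (R ^ 2 * (d - c)) := by
        rw [lintegral_indicator_const (measurableSet_Icc.prod measurableSet_Icc),
          Measure.volume_eq_prod, Measure.prod_prod, Real.volume_Icc, Real.volume_Icc, sub_zero,
          ← ENNReal.ofReal_mul hR, ← ENNReal.ofReal_mul hR, sq, mul_assoc]

theorem exists_mem_segment_mem_diff {E : Type*} [AddCommGroup E] [Module ℝ E]
    [TopologicalSpace E] [ContinuousAdd E] [ContinuousSMul ℝ E] {K O : Set E}
    (hK : IsClosed K) (hO : IsOpen O) (hOK : O ⊆ K) {x y : E} (hx : x ∈ K) (hy : y ∉ O) :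
    ∃ p ∈ segment ℝ x y, p ∈ K \ O := by
  by_contra! h
  have hcover : segment ℝ x y ⊆ Kᶜ ∪ O := fun p hp => by
    by_cases hpK : p ∈ K
    exacts [.inr (by_contra fun hpO => h p hp ⟨hpK, hpO⟩), .inl hpK]
  have hyK : y ∈ Kᶜ := (hcover (right_mem_segment ℝ x y)).resolve_right hy
  obtain ⟨q, -, hqK, hqO⟩ := (convex_segment x y).isPreconnected Kᶜ O hK.isOpen_compl hO hcover
    ⟨y, right_mem_segment ℝ x y, hyK⟩ ⟨x, left_mem_segment ℝ x y,
      (hcover (left_mem_segment ℝ x y)).resolve_left (not_not.mpr hx)⟩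
  exact hqK (hOK hqO)

theorem smul_mem_segment_zero_smul {E : Type*} [AddCommGroup E] [Module ℝ E] {r R : ℝ}
    (hr : 0 ≤ r) (hrR : r ≤ R) (z : E) : r • z ∈ segment ℝ 0 (R • z) := by
  rw [mem_segment_iff_sameRay, sub_zero, ← sub_smul]
  exact (SameRay.refl z).nonneg_smul_left hr |>.nonneg_smul_right (sub_nonneg.mpr hrR)

theorem Complex.arg_preimage_Icc_eq (a b : ℝ) :
    arg ⁻¹' Icc a b = arg ⁻¹' Icc (max a (-π)) (min b π) := by
  ext z
  simp [(neg_pi_lt_arg z).le, arg_le_pi z]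

theorem Complex.exists_mem_segment_mem_segment_exp_of_arg_mem_Icc {a b R : ℝ} (ha : -π ≤ a)
    (hb : b ≤ π) {w₁ w₂ : ℂ} (h₁ : arg w₁ ∈ Icc a b) (h₂ : arg w₂ ∉ Icc a b)
    (hw₁ : ‖w₁‖ ≤ R) (hw₂ : ‖w₂‖ ≤ R) :
    ∃ p ∈ segment ℝ w₁ w₂, ∃ c ∈ ({a, b} : Set ℝ), p ∈ segment ℝ 0 (R • exp (c * I)) := by
  -- `K` is the compact polar image rather than the cone itself, which need not be closed (at `0`,
  -- or along the negative real axis when `a = -π`); the radius `R + 1` keeps the outer arc of `K`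
  -- away from the segment.
  set f : ℝ × ℝ → ℂ := fun q => q.1 • exp (q.2 * I)
  have hf : ∀ z : ℂ, f (‖z‖, arg z) = z := fun z => by
    simp only [f, real_smul, norm_mul_exp_arg_mul_I]
  set K := f '' (Icc 0 (R + 1) ×ˢ Icc a b)
  set O := slitPlane ∩ arg ⁻¹' Ioo a b ∩ ball 0 (R + 1)
  have hK : IsClosed K := ((isCompact_Icc.prod isCompact_Icc).image (by fun_prop)).isClosed
  have hO : IsOpen O := by
    refine IsOpen.inter ?_ isOpen_ball
    exact (continuousOn_of_forall_continuousAt fun z hz => continuousAt_arg hz)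
      |>.isOpen_inter_preimage isOpen_slitPlane isOpen_Ioo
  have hOK : O ⊆ K := fun z ⟨⟨_, hz⟩, hzR⟩ =>
    ⟨(‖z‖, arg z), ⟨⟨norm_nonneg z, (mem_ball_zero_iff.mp hzR).le⟩, Ioo_subset_Icc_self hz⟩, hf z⟩
  have hw₁K : w₁ ∈ K := ⟨(‖w₁‖, arg w₁), ⟨⟨norm_nonneg _, by linarith⟩, h₁⟩, hf w₁⟩
  have hw₂O : w₂ ∉ O := fun h => h₂ (Ioo_subset_Icc_self h.1.2)
  obtain ⟨p, hp, ⟨⟨r, θ⟩, ⟨hr, hθ⟩, rfl⟩, hpO⟩ := exists_mem_segment_mem_diff hK hO hOK hw₁K hw₂O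
  dsimp only at hr hθ
  refine ⟨_, hp, ?_⟩
  have hrR : r ≤ R := by
    have := (convex_closedBall (0 : ℂ) R).segment_subset (mem_closedBall_zero_iff.mpr hw₁)
      (mem_closedBall_zero_iff.mpr hw₂) hp
    simpa [f, norm_smul, abs_of_nonneg hr.1] using this
  rcases hθ.1.eq_or_lt with rfl | hθa
  · exact ⟨_, .inl rfl, smul_mem_segment_zero_smul hr.1 hrR _⟩
  rcases hθ.2.eq_or_lt with rfl | hθb
  · exact ⟨_, .inr rfl, smul_mem_segment_zero_smul hr.1 hrR _⟩
  rcases hr.1.eq_or_lt with rfl | hr0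
  · exact ⟨a, .inl rfl, by simpa [f] using left_mem_segment ℝ (0 : ℂ) _⟩
  have harg : arg (f (r, θ)) = θ := by
    simp only [f]
    rw [real_smul, arg_real_mul _ hr0, exp_mul_I, arg_cos_add_sin_mul_I ⟨by linarith, by linarith⟩]
  refine absurd ⟨⟨mem_slitPlane_iff_arg.mpr ⟨?_, ?_⟩, ?_⟩, ?_⟩ hpO
  · rw [harg]; exact (hθb.trans_le hb).ne
  · intro h0
    simp [f, hr0.ne'] at h0
  · rw [mem_preimage, harg]; exact ⟨hθa, hθb⟩
  · rw [mem_ball_zero_iff]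
    simp only [f, norm_smul, norm_exp_ofReal_mul_I, Real.norm_eq_abs, abs_of_nonneg hr.1]
    linarith

def visibilityCone (𝒟 : Set ℂ) (r : ℝ) (x : ℂ) (θ : ℝ) : Set ℂ :=
  {y ∈ 𝒟 | |θ - arg (y - x)| ≤ r}

theorem visibilityCone_eq_inter_preimage (𝒟 : Set ℂ) (r : ℝ) (x : ℂ) (θ : ℝ) :
    visibilityCone 𝒟 r x θ = 𝒟 ∩ (· - x) ⁻¹' (arg ⁻¹' Icc (θ - r) (θ + r)) := by
  ext y
  exact and_congr_right fun _ => mem_Icc_iff_abs_le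

theorem volume_symmDiff_visibilityCone_heading_le {𝒟 : Set ℂ} {x : ℂ} {D : ℝ} (hD : 0 ≤ D)
    (h𝒟 : 𝒟 ⊆ closedBall x D) (r θ' θ'' : ℝ) :
    volume (visibilityCone 𝒟 r x θ' ∆ visibilityCone 𝒟 r x θ'') ≤
      ENNReal.ofReal (2 * D ^ 2 * |θ' - θ''|) := by
  set m := min θ' θ''
  set M := max θ' θ''
  have hsub : visibilityCone 𝒟 r x θ' ∆ visibilityCone 𝒟 r x θ'' ⊆ (· - x) ⁻¹'
      (closedBall 0 D ∩ arg ⁻¹' Icc (m - r) (M - r) ∪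
        closedBall 0 D ∩ arg ⁻¹' Icc (m + r) (M + r)) := by
    rw [visibilityCone_eq_inter_preimage, visibilityCone_eq_inter_preimage,
      ← inter_symmDiff_distrib_left, ← preimage_symmDiff, ← preimage_symmDiff,
      ← inter_union_distrib_left]
    rintro y ⟨hy, hyarg⟩
    exact ⟨by simpa [dist_eq_norm] using h𝒟 hy, Icc_symmDiff_Icc_subset _ _ _ hyarg⟩
  have hsector (c : ℝ) : volume (closedBall (0 : ℂ) D ∩ arg ⁻¹' Icc (m + c) (M + c)) ≤
      ENNReal.ofReal (D ^ 2 * (M - m)) :=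
    (volume_closedBall_inter_arg_preimage_Icc_le hD _ _).trans_eq (by rw [add_sub_add_right_eq_sub])
  calc _ ≤ _ := measure_mono hsub
    _ ≤ _ := (measure_preimage_sub_right _ _ _).trans_le (measure_union_le _ _)
    _ ≤ ENNReal.ofReal (D ^ 2 * (M - m)) + ENNReal.ofReal (D ^ 2 * (M - m)) := by
      simpa only [sub_eq_add_neg] using add_le_add (hsector (-r)) (hsector r)
    _ = _ := by
      have hMm : 0 ≤ D ^ 2 * (M - m) := by have : m ≤ M := min_le_max; positivity
      rw [← ENNReal.ofReal_add hMm hMm, max_sub_min_eq_abs']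
      congr 1
      ring

theorem volume_symmDiff_visibilityCone_apex_le {𝒟 : Set ℂ} {x' x'' : ℂ} {D : ℝ} (hD : 0 ≤ D)
    (hx' : 𝒟 ⊆ closedBall x' D) (hx'' : 𝒟 ⊆ closedBall x'' D) (r θ : ℝ) :
    volume (visibilityCone 𝒟 r x' θ ∆ visibilityCone 𝒟 r x'' θ) ≤
      ENNReal.ofReal (2 * D * ‖x' - x''‖) := by
  set a := max (θ - r) (-π)
  set b := min (θ + r) π
  set v := x' - x''
  let P (c : ℝ) : Set ℂ := segment ℝ 0 (D • exp (c * I)) + segment ℝ 0 v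
  have hsub : visibilityCone 𝒟 r x' θ ∆ visibilityCone 𝒟 r x'' θ ⊆ (· - x'') ⁻¹' (P a ∪ P b) := by
    rw [visibilityCone_eq_inter_preimage, visibilityCone_eq_inter_preimage,
      ← inter_symmDiff_distrib_left, arg_preimage_Icc_eq]
    rintro y ⟨hy, hyK⟩
    have hw : ‖y - x''‖ ≤ D := by simpa [dist_eq_norm] using hx'' hy
    have hwv : ‖y - x'‖ ≤ D := by simpa [dist_eq_norm] using hx' hy
    obtain ⟨p, hp, c, hc, hpc⟩ : ∃ p ∈ segment ℝ (y - x'') (y - x'), ∃ c ∈ ({a, b} : Set ℝ),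
        p ∈ segment ℝ 0 (D • exp (c * I)) := by
      rcases hyK with ⟨h₁, h₂⟩ | ⟨h₁, h₂⟩
      · obtain ⟨p, hp, hc⟩ := exists_mem_segment_mem_segment_exp_of_arg_mem_Icc
          (le_max_right _ _) (min_le_right _ _) h₁ h₂ hwv hw
        exact ⟨p, segment_symm ℝ (y - x'') _ ▸ hp, hc⟩
      · exact exists_mem_segment_mem_segment_exp_of_arg_mem_Icc
          (le_max_right _ _) (min_le_right _ _) h₁ h₂ hw hwv
    have hwP : y - x'' ∈ P c := by
      obtain ⟨s, t, hs, ht, hst, rfl⟩ := hp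
      refine ⟨_, hpc, t • v, ⟨s, t, hs, ht, hst, by simp⟩, ?_⟩
      rw [show s = 1 - t by linarith]
      simp only [v]
      module
    rcases hc with rfl | rfl
    exacts [.inl hwP, .inr hwP]
  have hP (c : ℝ) : volume (P c) ≤ ENNReal.ofReal (D * ‖v‖) := by
    have hnorm : ‖D • exp (c * I)‖ = D := by
      rw [norm_smul, norm_exp_ofReal_mul_I, mul_one, Real.norm_of_nonneg hD]
    simpa only [hnorm] using volume_segment_add_segment_le (D • exp (c * I)) v
  calc _ ≤ _ := measure_mono hsub
    _ ≤ _ := (measure_preimage_sub_right _ _ _).trans_le (measure_union_le _ _)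
    _ ≤ _ := add_le_add (hP a) (hP b)
    _ = _ := by
      rw [← ENNReal.ofReal_add (by positivity) (by positivity)]
      congr 1
      ring

theorem fov_cone_mu_globally_lipschitz_general
    (𝒟 : Set ℂ) (hbdd : Bornology.IsBounded 𝒟) (D : ℝ)
    (hD : Metric.diam 𝒟 = D) (φ : ℝ)
    (C : ℂ × ℝ → Set ℂ)
    (hC : ∀ x θ, C (x, θ) = {y ∈ 𝒟 | |θ - Complex.arg (y - x)| ≤ φ / 2}) :
    ∀ x' ∈ 𝒟, ∀ x'' ∈ 𝒟, ∀ θ' θ'' : ℝ,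
      (volume (symmDiff (C (x', θ')) (C (x'', θ'')))).toReal
        ≤ 2 * D * Real.sqrt (D ^ 2 + 1) *
            Real.sqrt (‖x' - x''‖ ^ 2 + (θ' - θ'') ^ 2) := by
  intro x' hx' x'' hx'' θ' θ''
  have hD0 : 0 ≤ D := hD ▸ diam_nonneg
  have hball {x : ℂ} (hx : x ∈ 𝒟) : 𝒟 ⊆ closedBall x D := fun y hy =>
    hD ▸ dist_le_diam_of_mem hbdd hy hx
  have hcone : ∀ x θ, C (x, θ) = visibilityCone 𝒟 (φ / 2) x θ := hC
  rw [hcone, hcone]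
  calc _ ≤ 2 * D ^ 2 * |θ' - θ''| + 2 * D * ‖x' - x''‖ := by
        refine ENNReal.toReal_le_of_le_ofReal (by positivity)
          ((measure_symmDiff_le _ (visibilityCone 𝒟 (φ / 2) x' θ'') _).trans ?_)
        rw [ENNReal.ofReal_add (by positivity) (by positivity)]
        exact add_le_add (volume_symmDiff_visibilityCone_heading_le hD0 (hball hx') _ _ _)
          (volume_symmDiff_visibilityCone_apex_le hD0 (hball hx') (hball hx'') _ _)
    _ = 2 * D * (D * |θ' - θ''| + 1 * ‖x' - x''‖) := by ring
    _ ≤ 2 * D * (√(D ^ 2 + 1) * √(‖x' - x''‖ ^ 2 + (θ' - θ'') ^ 2)) := by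
        gcongr
        have := mul_add_mul_le_sqrt_mul_sqrt D 1 |θ' - θ''| ‖x' - x''‖
        rwa [one_pow, sq_abs, add_comm ((θ' - θ'') ^ 2)] at this
    _ = _ := by ring

/-- The infinite-range visibility cone
`C(x, θ) = { y ∈ 𝒟 : |θ − arg(y − x)| ≤ φ/2 }` over a bounded domain `𝒟 ⊆ ℝ² ≃ ℂ`
of diameter `D` is μ-globally Lipschitz:
`μ(C z' Δ C z'') ≤ 2 D √(D² + 1) ‖z' − z''‖`. -/
theorem fov_cone_mu_globally_lipschitz
    (𝒟 : Set ℂ) (hbdd : Bornology.IsBounded 𝒟) (D : ℝ)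
    (hD : Metric.diam 𝒟 = D) (φ : ℝ) (hφ : 0 < φ)
    (C : ℂ × ℝ → Set ℂ)
    (hC : ∀ x θ, C (x, θ) = {y ∈ 𝒟 | |θ - Complex.arg (y - x)| ≤ φ / 2}) :
    ∀ x' ∈ 𝒟, ∀ x'' ∈ 𝒟, ∀ θ' θ'' : ℝ,
      (volume (symmDiff (C (x', θ')) (C (x'', θ'')))).toReal
        ≤ 2 * D * Real.sqrt (D ^ 2 + 1) *
            Real.sqrt (‖x' - x''‖ ^ 2 + (θ' - θ'') ^ 2) :=
  fov_cone_mu_globally_lipschitz_general 𝒟 hbdd D hD φ C hC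
end

section
/- Let D ⊆ ℝ² be nonempty, closed, and convex, and let g : D → ℝ. Define f(x) = g(π_D(x)) + dist(x, D). Then a point x ∈ D is a local minimizer of g on D (with respect to the subspace topology on D) if and only if x is a local minimizer of f on ℝ². -/
/-!
A nearest-point map `π` onto `D` fixes `D` and moves a point `y` at most `dist y x` away from any
`x ∈ D`, so `dist (π y) x ≤ 2 * dist y x`. Hence a `g`-minimality ball of radius `ε` around `x`
in `D` yields an `f`-minimality ball of radius `ε / 2`, using `f y ≥ g (π y)` and `f x = g x`;
conversely `f = g` on `D`.
-/

open Metric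

section NearestPoint

variable {X : Type*} [MetricSpace X] {D : Set X} {π : X → X}

theorem nearestPoint_eq_self_of_mem (hπproj : ∀ y, ∀ z ∈ D, dist y (π y) ≤ dist y z)
    {y : X} (hy : y ∈ D) : π y = y :=
  (dist_le_zero.mp (by simpa using hπproj y y hy)).symm

theorem dist_nearestPoint_le_two_mul (hπproj : ∀ y, ∀ z ∈ D, dist y (π y) ≤ dist y z)
    (y : X) {x : X} (hx : x ∈ D) : dist (π y) x ≤ 2 * dist y x :=
  calc dist (π y) x ≤ dist (π y) y + dist y x := dist_triangle _ _ _
    _ = dist y (π y) + dist y x := by rw [dist_comm]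
    _ ≤ dist y x + dist y x := by gcongr; exact hπproj y x hx
    _ = 2 * dist y x := by ring

theorem localMin_on_iff_localMin_add_infDist (hπmem : ∀ y, π y ∈ D)
    (hπproj : ∀ y, ∀ z ∈ D, dist y (π y) ≤ dist y z) (g : X → ℝ) {x : X} (hx : x ∈ D) :
    (∃ ε > 0, ∀ y ∈ ball x ε ∩ D, g x ≤ g y) ↔
      (∃ ε > 0, ∀ y ∈ ball x ε, g (π x) + infDist x D ≤ g (π y) + infDist y D) := by
  have hfix : ∀ {y}, y ∈ D → g (π y) + infDist y D = g y := fun hy => by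
    rw [nearestPoint_eq_self_of_mem hπproj hy, infDist_zero_of_mem hy, add_zero]
  rw [hfix hx]
  constructor
  · rintro ⟨ε, hε, hmin⟩
    refine ⟨ε / 2, half_pos hε, fun y hy => ?_⟩
    have hπy : π y ∈ ball x ε ∩ D := by
      refine ⟨?_, hπmem y⟩
      have := dist_nearestPoint_le_two_mul hπproj y hx
      rw [mem_ball] at hy ⊢
      linarith
    linarith [hmin (π y) hπy, infDist_nonneg (x := y) (s := D)]
  · rintro ⟨ε, hε, hmin⟩
    exact ⟨ε, hε, fun y hy => hfix hy.2 ▸ hmin y hy.1⟩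

end NearestPoint

theorem augmented_metric_local_min_iff_general
    (D : Set (EuclideanSpace ℝ (Fin 2)))
    (π : EuclideanSpace ℝ (Fin 2) → EuclideanSpace ℝ (Fin 2))
    (hπmem : ∀ y, π y ∈ D)
    (hπproj : ∀ y, ∀ z ∈ D, ‖y - π y‖ ≤ ‖y - z‖)
    (g : EuclideanSpace ℝ (Fin 2) → ℝ)
    (f : EuclideanSpace ℝ (Fin 2) → ℝ)
    (hf : ∀ y, f y = g (π y) + Metric.infDist y D)
    (x : EuclideanSpace ℝ (Fin 2)) (hx : x ∈ D) :
    (∃ ε > 0, ∀ y ∈ ball x ε ∩ D, g x ≤ g y) ↔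
      (∃ ε > 0, ∀ y ∈ ball x ε, f x ≤ f y) := by
  simp only [hf]
  exact localMin_on_iff_localMin_add_infDist hπmem (by simpa only [dist_eq_norm] using hπproj) g hx

/-- With `f(x) = g(π_D x) + dist(x, D)`, a point of `D` is a local minimizer of
`g` on `D` iff it is a local minimizer of `f` on `ℝ²`. -/
theorem augmented_metric_local_min_iff
    (D : Set (EuclideanSpace ℝ (Fin 2))) (hne : D.Nonempty)
    (hclosed : IsClosed D) (hconv : Convex ℝ D)
    (π : EuclideanSpace ℝ (Fin 2) → EuclideanSpace ℝ (Fin 2))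
    (hπmem : ∀ y, π y ∈ D)
    (hπproj : ∀ y, ∀ z ∈ D, ‖y - π y‖ ≤ ‖y - z‖)
    (g : EuclideanSpace ℝ (Fin 2) → ℝ)
    (f : EuclideanSpace ℝ (Fin 2) → ℝ)
    (hf : ∀ y, f y = g (π y) + Metric.infDist y D)
    (x : EuclideanSpace ℝ (Fin 2)) (hx : x ∈ D) :
    (∃ ε > 0, ∀ y ∈ ball x ε ∩ D, g x ≤ g y) ↔
      (∃ ε > 0, ∀ y ∈ ball x ε, f x ≤ f y) :=
  augmented_metric_local_min_iff_general D π hπmem hπproj g f hf x hx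
end

section
/- Let f : ℝ² → ℝ be any function and let Γ be its set of local minimizers. Then the set of optimal values f(Γ) = { f(x) : x ∈ Γ } has empty interior in ℝ. -/
/-!
A local-minimum value `f x` is the minimum of `f` on some member of a countable basis containing
`x`, and a set has at most one minimum value, so there are only countably many local-minimum
values; a countable subset of `ℝ` has empty interior.
-/

open Metric TopologicalSpace

theorem Set.subsingleton_image_setOf_isMinOn {α β : Type*} [PartialOrder β] (f : α → β)
    (s : Set α) : (f '' {z ∈ s | IsMinOn f s z}).Subsingleton := by
  rintro _ ⟨z, ⟨hz, hz_min⟩, rfl⟩ _ ⟨u, ⟨hu, hu_min⟩, rfl⟩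
  exact le_antisymm (hz_min hu) (hu_min hz)

theorem countable_image_setOf_isLocalMin {X β : Type*} [TopologicalSpace X]
    [SecondCountableTopology X] [PartialOrder β] (f : X → β) :
    (f '' {x | IsLocalMin f x}).Countable := by
  have hsub : f '' {x | IsLocalMin f x} ⊆
      ⋃ t ∈ countableBasis X, f '' {z ∈ t | IsMinOn f t z} := by
    rintro _ ⟨x, hx, rfl⟩
    obtain ⟨t, ht, hxt, hts⟩ := (isBasis_countableBasis X).mem_nhds_iff.mp hx
    exact Set.mem_biUnion ht ⟨x, ⟨hxt, fun y hy => hts hy⟩, rfl⟩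
  refine ((countable_countableBasis X).biUnion fun t _ => ?_).mono hsub
  exact (Set.subsingleton_image_setOf_isMinOn f t).countable

/-- The set of local-minimum values of any function `f : ℝ² → ℝ` has empty
interior in `ℝ`. -/
theorem local_minimum_values_empty_interior
    (f : EuclideanSpace ℝ (Fin 2) → ℝ) :
    interior (f '' {x | ∃ ε > 0, ∀ y ∈ ball x ε, f x ≤ f y}) = ∅ := by
  have h_localMin : {x | ∃ ε > 0, ∀ y ∈ ball x ε, f x ≤ f y} = {x | IsLocalMin f x} := by
    ext x
    exact eventually_nhds_iff_ball.symm
  rw [h_localMin, interior_eq_empty_iff_dense_compl]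
  exact (countable_image_setOf_isLocalMin f).dense_compl ℝ
end
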